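/- There exists a (unique) group homomorphism φ : W → (ZMod 2) × (ZMod 2) with φ(s₁) = (1,0), φ(s₂) = (0,1), φ(s₃) = (1,0) and φ(s₄) = (1,1); this φ is surjective, and its kernel is isomorphic to the Klein bottle group K. -/

import Mathlib

/-- The Coxeter matrix of the 4-cycle: off-diagonal entries are `2` for cyclically adjacent
indices and `0` (i.e. `∞`) for the two opposite pairs. -/
def C4 : CoxeterMatrix (Fin 4) where
  M := Matrix.of fun i j : Fin 4 ↦
    if i = j then 1
    else if (i.val + 1) % 4 = j.val ∨ (j.val + 1) % 4 = i.val then 2 else 0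
  off_diagonal := by simp only [Matrix.of_apply]; decide

/-- `W`, the right-angled Coxeter group of the 4-cycle. -/
abbrev W : Type := C4.Group

/-- The simple reflections `s₁, s₂, s₃, s₄` of `W`, indexed by `Fin 4`
(so `s 0 = s₁`, `s 1 = s₂`, `s 2 = s₃`, `s 3 = s₄`). -/
def s (i : Fin 4) : W := C4.simple i

/-- The single relator `a·b·a·b⁻¹` of the Klein bottle group, on two generators
`a = FreeGroup.of 0`, `b = FreeGroup.of 1`. -/
def kleinRels : Set (FreeGroup (Fin 2)) :=
  {FreeGroup.of 0 * FreeGroup.of 1 * FreeGroup.of 0 * (FreeGroup.of 1)⁻¹}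

/-- The Klein bottle group `K = ⟨a, b ∣ a·b·a·b⁻¹ = 1⟩`. -/
abbrev K : Type := PresentedGroup kleinRels

/-!
With `a = s₁s₃` and `b = s₁s₂s₄`, one has `a b a b⁻¹ = 1` in `W` and `φ a = φ b = 1`, so
`a ↦ a, b ↦ b` defines `ψ : K → ker φ`.

`ψ` is injective: every element of `K` is `b ^ m * a ^ n`, and in the representation
`W → D∞ × D∞` in which `s₁, s₃` are the two generating reflections of the first factor and
`s₂, s₄` those of the second, `b ^ m * a ^ n` maps to `(ρ ^ m * t ^ n, t ^ m)` with `ρ` a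
reflection and `t` a translation of infinite order, which is trivial only for `m = n = 0`.

`ψ` is onto `ker φ` by Schreier's argument: the section `σ (x, y) = s₁ ^ x * s₂ ^ y` of `φ`
satisfies `σ q * sᵢ * σ (q * φ sᵢ)⁻¹ ∈ ⟨a, b⟩` for all `q` and `i`, hence by induction on words
`w * σ (φ w)⁻¹ ∈ ⟨a, b⟩` for all `w`, which for `w ∈ ker φ` says `w ∈ ⟨a, b⟩`.
-/

namespace CoxeterSystem

variable {B W : Type*} [Group W] {M : CoxeterMatrix B} (cs : CoxeterSystem M W)

theorem existsUnique_forall_map_simple_eq {G : Type*} [Monoid G] {f : B → G}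
    (hf : M.IsLiftable f) : ∃! φ : W →* G, ∀ i, φ (cs.simple i) = f i :=
  ⟨cs.lift ⟨f, hf⟩, cs.lift_apply_simple hf,
    fun _ hφ ↦ cs.ext_simple fun i ↦ (hφ i).trans (cs.lift_apply_simple hf i).symm⟩

theorem commute_simple_of_eq_two {i j : B} (h : M i j = 2) :
    Commute (cs.simple i) (cs.simple j) := by
  have := cs.simple_mul_simple_pow i j
  rwa [h, pow_two, mul_eq_one_iff_eq_inv, mul_inv_rev, cs.inv_simple, cs.inv_simple] at this

theorem ker_le_of_forall_mul_simple_mul_inv_mem {Q : Type*} [Group Q] (φ : W →* Q)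
    (σ : Q → W) (H : Subgroup W) (hσ : σ 1 = 1)
    (h : ∀ q i, σ q * cs.simple i * (σ (q * φ (cs.simple i)))⁻¹ ∈ H) : φ.ker ≤ H := by
  have key (w : W) : w * (σ (φ w))⁻¹ ∈ H := by
    induction w using cs.simple_induction_right with
    | one => simp [hσ]
    | mul_simple_right w i ih => simpa [mul_assoc] using H.mul_mem ih (h (φ w) i)
  intro w hw
  simpa [MonoidHom.mem_ker.1 hw, hσ] using key w

end CoxeterSystem

section KleinRelation

variable {G : Type*} [Group G] {a b : G}

theorem exists_zpow_mul_zpow_eq (hrel : a * b * a * b⁻¹ = 1)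
    (hgen : Subgroup.closure {a, b} = ⊤) (g : G) : ∃ m n : ℤ, b ^ m * a ^ n = g := by
  have hconj : SemiconjBy b a⁻¹ a := mul_inv_eq_iff_eq_mul.2 (mul_inv_eq_one.1 hrel).symm
  have hb (n : ℤ) : a ^ n * b = b * a ^ (-n) := by
    simpa [inv_zpow'] using (hconj.zpow_right n).symm
  have hb_inv (n : ℤ) : a ^ n * b⁻¹ = b⁻¹ * a ^ (-n) := by
    simpa [inv_zpow'] using (hconj.zpow_right (-n)).inv_symm_left.symm
  have hg : g ∈ Subgroup.closure {a, b} := hgen ▸ Subgroup.mem_top g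
  induction hg using Subgroup.closure_induction_right with
  | one => exact ⟨0, 0, by simp⟩
  | mul_right x _ y hy ih =>
    obtain ⟨m, n, rfl⟩ := ih
    rcases hy with rfl | rfl
    · exact ⟨m, n + 1, by rw [zpow_add_one, mul_assoc]⟩
    · exact ⟨m + 1, -n, by rw [mul_assoc, hb, ← mul_assoc, zpow_add_one]⟩
  | mul_inv_cancel x _ y hy ih =>
    obtain ⟨m, n, rfl⟩ := ih
    rcases hy with rfl | rfl
    · exact ⟨m, n - 1, by rw [zpow_sub_one, mul_assoc]⟩
    · exact ⟨m - 1, -n, by rw [mul_assoc, hb_inv, ← mul_assoc, zpow_sub_one]⟩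

theorem injective_of_map_zpow_mul_zpow_eq_one {H : Type*} [Group H] {f : G →* H}
    (hrel : a * b * a * b⁻¹ = 1) (hgen : Subgroup.closure {a, b} = ⊤)
    (hf : ∀ m n : ℤ, f (b ^ m * a ^ n) = 1 → m = 0 ∧ n = 0) : Function.Injective f := by
  refine (injective_iff_map_eq_one f).2 fun g hg ↦ ?_
  obtain ⟨m, n, rfl⟩ := exists_zpow_mul_zpow_eq hrel hgen g
  obtain ⟨rfl, rfl⟩ := hf m n hg
  simp

end KleinRelation

def kleinA : K := PresentedGroup.of 0

def kleinB : K := PresentedGroup.of 1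

theorem kleinA_mul_kleinB_mul_kleinA_mul_kleinB_inv : kleinA * kleinB * kleinA * kleinB⁻¹ = 1 :=
  PresentedGroup.one_of_mem (Set.mem_singleton _)

theorem closure_kleinA_kleinB : Subgroup.closure {kleinA, kleinB} = ⊤ :=
  eq_top_iff.2 fun k _ ↦ PresentedGroup.generated_by _ _
    (fun j ↦ Subgroup.subset_closure (by fin_cases j <;> simp [kleinA, kleinB])) k

@[simp] theorem s_mul_s_self (i : Fin 4) : s i * s i = 1 :=
  C4.toCoxeterSystem.simple_mul_simple_self i

@[simp] theorem s_mul_s_mul_self (i : Fin 4) (w : W) : s i * (s i * w) = w :=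
  C4.toCoxeterSystem.simple_mul_simple_cancel_left i

@[simp] theorem inv_s (i : Fin 4) : (s i)⁻¹ = s i := C4.toCoxeterSystem.inv_simple i

theorem commute_s {i j : Fin 4} (h : C4.M i j = 2) : Commute (s i) (s j) :=
  C4.toCoxeterSystem.commute_simple_of_eq_two h

-- Simp normal form of words in `W`: `s 0` and `s 2` move left past their commuting neighbours.
@[simp] theorem s_one_mul_s_zero : s 1 * s 0 = s 0 * s 1 := (commute_s rfl).eq
@[simp] theorem s_one_mul_s_two : s 1 * s 2 = s 2 * s 1 := (commute_s rfl).eq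
@[simp] theorem s_three_mul_s_zero : s 3 * s 0 = s 0 * s 3 := (commute_s rfl).eq
@[simp] theorem s_three_mul_s_two : s 3 * s 2 = s 2 * s 3 := (commute_s rfl).eq
@[simp] theorem s_one_mul_s_zero_mul (w : W) : s 1 * (s 0 * w) = s 0 * (s 1 * w) :=
  (commute_s rfl).left_comm w
@[simp] theorem s_one_mul_s_two_mul (w : W) : s 1 * (s 2 * w) = s 2 * (s 1 * w) :=
  (commute_s rfl).left_comm w
@[simp] theorem s_three_mul_s_zero_mul (w : W) : s 3 * (s 0 * w) = s 0 * (s 3 * w) :=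
  (commute_s rfl).left_comm w
@[simp] theorem s_three_mul_s_two_mul (w : W) : s 3 * (s 2 * w) = s 2 * (s 3 * w) :=
  (commute_s rfl).left_comm w

def kleinToW : K →* W :=
  PresentedGroup.toGroup (f := ![s 0 * s 2, s 0 * (s 1 * s 3)]) <| by
    simp [kleinRels, mul_assoc]

@[simp] theorem kleinToW_kleinA : kleinToW kleinA = s 0 * s 2 := PresentedGroup.toGroup.of _

@[simp] theorem kleinToW_kleinB : kleinToW kleinB = s 0 * (s 1 * s 3) :=
  PresentedGroup.toGroup.of _

-- `DihedralGroup 0` is `D∞`, and `sr 0`, `sr 1` are its generating reflections.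
def dihedralGen : Fin 4 → DihedralGroup 0 × DihedralGroup 0 :=
  ![(.sr 0, 1), (1, .sr 0), (.sr 1, 1), (1, .sr 1)]

theorem isLiftable_dihedralGen : C4.IsLiftable dihedralGen := by
  unfold CoxeterMatrix.IsLiftable; decide

def toDihedralProd : W →* DihedralGroup 0 × DihedralGroup 0 :=
  C4.toCoxeterSystem.lift ⟨dihedralGen, isLiftable_dihedralGen⟩

theorem toDihedralProd_s (i : Fin 4) : toDihedralProd (s i) = dihedralGen i :=
  C4.toCoxeterSystem.lift_apply_simple isLiftable_dihedralGen i

theorem kleinToW_injective : Function.Injective kleinToW := by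
  refine injective_of_map_zpow_mul_zpow_eq_one kleinA_mul_kleinB_mul_kleinA_mul_kleinB_inv
    closure_kleinA_kleinB fun m n h ↦ ?_
  have h' := congrArg toDihedralProd h
  simp only [map_mul, map_zpow, kleinToW_kleinB, kleinToW_kleinA, toDihedralProd_s, dihedralGen,
    Matrix.cons_val_zero, Matrix.cons_val_one, Matrix.cons_val, Prod.mk_mul_mk, mul_one,
    DihedralGroup.sr_mul_sr, sub_zero, one_mul, Prod.pow_mk, DihedralGroup.r_zpow, one_zpow,
    map_one, Prod.mk_eq_one] at h'
  obtain ⟨hfst, hsnd⟩ := h'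
  rw [← DihedralGroup.r_zero, DihedralGroup.r.injEq, Int.cast_eq_zero] at hsnd
  subst hsnd
  rw [zpow_zero, one_mul, ← DihedralGroup.r_zero, DihedralGroup.r.injEq, Int.cast_eq_zero] at hfst
  exact ⟨rfl, hfst⟩

def phiGen : Fin 4 → Multiplicative (ZMod 2 × ZMod 2) :=
  ![.ofAdd (1, 0), .ofAdd (0, 1), .ofAdd (1, 0), .ofAdd (1, 1)]

theorem isLiftable_phiGen : C4.IsLiftable phiGen := by
  unfold CoxeterMatrix.IsLiftable; decide

theorem map_s_eq_iff_eq_phiGen (φ : W →* Multiplicative (ZMod 2 × ZMod 2)) :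
    (φ (s 0) = Multiplicative.ofAdd (1, 0) ∧ φ (s 1) = Multiplicative.ofAdd (0, 1) ∧
      φ (s 2) = Multiplicative.ofAdd (1, 0) ∧ φ (s 3) = Multiplicative.ofAdd (1, 1)) ↔
      ∀ i, φ (s i) = phiGen i := by
  simp [Fin.forall_fin_succ, phiGen]

def phiSection (q : Multiplicative (ZMod 2 × ZMod 2)) : W :=
  s 0 ^ q.toAdd.1.val * s 1 ^ q.toAdd.2.val

theorem map_phiSection {φ : W →* Multiplicative (ZMod 2 × ZMod 2)}
    (hφ : ∀ i, φ (s i) = phiGen i) (q : Multiplicative (ZMod 2 × ZMod 2)) :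
    φ (phiSection q) = q := by
  simp only [phiSection, map_mul, map_pow, hφ]
  revert q; decide

theorem phiSection_mul_s_mul_inv_mem_range (q : Multiplicative (ZMod 2 × ZMod 2)) (i : Fin 4) :
    phiSection q * s i * (phiSection (q * phiGen i))⁻¹ ∈ kleinToW.range := by
  have ha : s 0 * s 2 ∈ kleinToW.range := ⟨kleinA, by simp⟩
  have ha' : s 2 * s 0 ∈ kleinToW.range := ⟨kleinA⁻¹, by simp⟩
  have hb : s 0 * (s 1 * s 3) ∈ kleinToW.range := ⟨kleinB, by simp⟩
  have hb' : s 0 * (s 3 * s 1) ∈ kleinToW.range := ⟨kleinB⁻¹, by simp [mul_assoc]⟩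
  have hq : q = .ofAdd (0, 0) ∨ q = .ofAdd (1, 0) ∨ q = .ofAdd (0, 1) ∨ q = .ofAdd (1, 1) := by
    revert q; decide
  rcases hq with rfl | rfl | rfl | rfl <;> fin_cases i <;>
    simp [phiSection, phiGen, ← ofAdd_add, mul_assoc, ZMod.val_one,
      CharTwo.add_self_eq_zero, -MonoidHom.mem_range, ha, ha', hb, hb']

theorem ker_eq_range_kleinToW {φ : W →* Multiplicative (ZMod 2 × ZMod 2)}
    (hφ : ∀ i, φ (s i) = phiGen i) : φ.ker = kleinToW.range := by
  refine le_antisymm ?_ ((MonoidHom.range_le_ker_iff _ _).2 ?_)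
  · refine C4.toCoxeterSystem.ker_le_of_forall_mul_simple_mul_inv_mem φ phiSection _
      (by simp [phiSection]) fun q i ↦ by
        have := phiSection_mul_s_mul_inv_mem_range q i
        rwa [← hφ] at this
  · refine PresentedGroup.ext fun j ↦ ?_
    fin_cases j <;> simp [kleinToW, hφ, phiGen, ← ofAdd_add, CharTwo.add_self_eq_zero]

/-- There is a unique group homomorphism `φ : W → (ZMod 2) × (ZMod 2)` with `φ(s₁) = (1,0)`,
`φ(s₂) = (0,1)`, `φ(s₃) = (1,0)`, `φ(s₄) = (1,1)`; it is surjective and its kernel is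
isomorphic to the Klein bottle group `K`. -/
theorem stmt4 :
    (∃! φ : W →* Multiplicative (ZMod 2 × ZMod 2),
      φ (s 0) = Multiplicative.ofAdd (1, 0) ∧ φ (s 1) = Multiplicative.ofAdd (0, 1) ∧
      φ (s 2) = Multiplicative.ofAdd (1, 0) ∧ φ (s 3) = Multiplicative.ofAdd (1, 1)) ∧
    ∀ φ : W →* Multiplicative (ZMod 2 × ZMod 2),
      (φ (s 0) = Multiplicative.ofAdd (1, 0) ∧ φ (s 1) = Multiplicative.ofAdd (0, 1) ∧
       φ (s 2) = Multiplicative.ofAdd (1, 0) ∧ φ (s 3) = Multiplicative.ofAdd (1, 1)) →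
      Function.Surjective φ ∧ Nonempty (φ.ker ≃* K) := by
  refine ⟨(existsUnique_congr map_s_eq_iff_eq_phiGen).2
    (C4.toCoxeterSystem.existsUnique_forall_map_simple_eq isLiftable_phiGen), fun φ hφ ↦ ?_⟩
  rw [map_s_eq_iff_eq_phiGen] at hφ
  refine ⟨fun q ↦ ⟨phiSection q, map_phiSection hφ q⟩, ⟨?_⟩⟩
  exact (MulEquiv.subgroupCongr (ker_eq_range_kleinToW hφ)).trans
    (MonoidHom.ofInjective kleinToW_injective).symm
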